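/- arXiv:2405.03378 — 3 statements merged into one kernel-verified Lean document; each statement's English description precedes it below -/
import Mathlib

section
/- Let A be a Banach algebra (or the algebra of bounded operators on a Hilbert space) and let a, b ∈ A satisfy a² = 0 and b² = 0. Then the exponential of a − b admits the closed form exp(a − b) = 1 + Σ_{m≥1} (−1)^m (ba)^m/(2m)! + a·Σ_{m≥0} (−1)^m (ba)^m/(2m+1)! − (Σ_{m≥0} (−1)^m (ba)^m/(2m+1)!)·b + a·(Σ_{m≥1} (−1)^m (ba)^{m−1}/(2m)!)·b. Equivalently, writing formally X = √(ba), exp(a−b) = cos X + a·(sin X)/X − (sin X)/X·b + a·((cos X − 1)/X²)·b. -/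
/-!
If `a ^ 2 = b ^ 2 = 0` then `(a - b) ^ 2 = -(a * b + b * a)`, and the two summands annihilate
each other, so the powers of `a - b` are read off from those of `b * a`:
`(a - b) ^ (2 * m + 1) = ± (a * (b * a) ^ m - (b * a) ^ m * b)` and
`(a - b) ^ (2 * m + 2) = ± (a * (b * a) ^ m * b + (b * a) ^ (m + 1))`.
Splitting the exponential series of `a - b` into its even and odd parts and collecting terms gives
the closed form; every series involved is dominated by the exponential series of `b * a`.
-/

section SquareZero

variable {R : Type*} [Ring R] {a b : R}

theorem sub_sq_of_sq_eq_zero (ha : a ^ 2 = 0) (hb : b ^ 2 = 0) :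
    (a - b) ^ 2 = -(a * b + b * a) := by
  rw [sq, sub_mul, mul_sub, mul_sub, ← sq, ← sq, ha, hb]
  abel

theorem mul_mul_add_mul_pow_of_sq_eq_zero (ha : a ^ 2 = 0) (m : ℕ) :
    a * (a * b + b * a) ^ m = a * (b * a) ^ m := by
  induction m with
  | zero => simp
  | succ m ih =>
    have haa : a * (b * a) ^ m * a = 0 := by rw [← mul_pow_mul, mul_assoc, ← sq, ha, mul_zero]
    rw [pow_succ, ← mul_assoc, ih, mul_add, ← mul_assoc, haa, zero_mul, zero_add, pow_succ,
      mul_assoc]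

theorem mul_mul_add_mul_pow_eq_pow_mul_of_sq_eq_zero (hb : b ^ 2 = 0) (m : ℕ) :
    b * (a * b + b * a) ^ m = (b * a) ^ m * b := by
  rw [add_comm, mul_mul_add_mul_pow_of_sq_eq_zero hb, mul_pow_mul]

theorem mul_add_mul_pow_succ_of_sq_eq_zero (ha : a ^ 2 = 0) (hb : b ^ 2 = 0) (m : ℕ) :
    (a * b + b * a) ^ (m + 1) = a * (b * a) ^ m * b + (b * a) ^ (m + 1) := by
  rw [pow_succ', add_mul, mul_assoc, mul_assoc, mul_mul_add_mul_pow_eq_pow_mul_of_sq_eq_zero hb,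
    mul_mul_add_mul_pow_of_sq_eq_zero ha, ← mul_assoc, ← mul_assoc, ← pow_succ']

theorem neg_pow_eq_zsmul (x : R) (m : ℕ) : (-x) ^ m = (-1 : ℤ) ^ m • x ^ m := by
  rw [neg_pow, zsmul_eq_mul]
  push_cast
  rfl

theorem sub_pow_odd_of_sq_eq_zero (ha : a ^ 2 = 0) (hb : b ^ 2 = 0) (m : ℕ) :
    (a - b) ^ (2 * m + 1) = (-1 : ℤ) ^ m • (a * (b * a) ^ m - (b * a) ^ m * b) := by
  rw [pow_succ', pow_mul, sub_sq_of_sq_eq_zero ha hb, neg_pow_eq_zsmul, mul_smul_comm, sub_mul,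
    mul_mul_add_mul_pow_of_sq_eq_zero ha, mul_mul_add_mul_pow_eq_pow_mul_of_sq_eq_zero hb]

theorem sub_pow_even_of_sq_eq_zero (ha : a ^ 2 = 0) (hb : b ^ 2 = 0) (m : ℕ) :
    (a - b) ^ (2 * (m + 1)) =
      (-1 : ℤ) ^ (m + 1) • (a * (b * a) ^ m * b + (b * a) ^ (m + 1)) := by
  rw [pow_mul, sub_sq_of_sq_eq_zero ha hb, neg_pow_eq_zsmul,
    mul_add_mul_pow_succ_of_sq_eq_zero ha hb]

end SquareZero

theorem smul_neg_one_pow_zsmul {𝕜 A : Type*} [CommRing 𝕜] [Ring A] [Algebra 𝕜 A]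
    (c : 𝕜) (m : ℕ) (z : A) : c • ((-1 : ℤ) ^ m • z) = ((-1) ^ m * c) • z := by
  rw [mul_comm, mul_smul, ← Int.cast_smul_eq_zsmul 𝕜]
  push_cast
  rfl

section Series

variable {𝕜 A : Type*} [CommRing 𝕜] [Ring A] [Algebra 𝕜 A] [TopologicalSpace A]
  [IsTopologicalRing A] {a b : A}

theorem hasSum_smul_sub_pow_of_sq_eq_zero (ha : a ^ 2 = 0) (hb : b ^ 2 = 0) (f : ℕ → 𝕜)
    {S T : A}
    (hS : HasSum (fun m => ((-1) ^ (m + 1) * f (2 * (m + 1))) • (b * a) ^ m) S)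
    (hT : HasSum (fun m => ((-1) ^ m * f (2 * m + 1)) • (b * a) ^ m) T) :
    HasSum (fun n => f n • (a - b) ^ n)
      (f 0 • 1 + (a * S * b + b * a * S) + (a * T - T * b)) := by
  refine HasSum.even_add_odd ?_ ?_
  · rw [← hasSum_nat_add_iff' 1, Finset.range_one, Finset.sum_singleton, mul_zero, pow_zero,
      add_sub_cancel_left]
    refine (((hS.mul_left a).mul_right b).add (hS.mul_left (b * a))).congr_fun fun m => ?_
    rw [sub_pow_even_of_sq_eq_zero ha hb, smul_neg_one_pow_zsmul, smul_add,
      mul_smul_comm, smul_mul_assoc, mul_smul_comm, ← pow_succ']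
  · refine ((hT.mul_left a).sub (hT.mul_right b)).congr_fun fun m => ?_
    rw [sub_pow_odd_of_sq_eq_zero ha hb, smul_neg_one_pow_zsmul, smul_sub,
      mul_smul_comm, smul_mul_assoc]

end Series

theorem summable_smul_pow_of_norm_le_norm_inv_factorial {𝕂 A : Type*}
    [NontriviallyNormedField 𝕂] [CharZero 𝕂] [ContinuousSMul ℚ 𝕂] [NormedRing A]
    [NormedAlgebra 𝕂 A] [CompleteSpace A] (y : A) {c : ℕ → 𝕂}
    (hc : ∀ m, ‖c m‖ ≤ ‖(m.factorial : 𝕂)⁻¹‖) : Summable fun m => c m • y ^ m :=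
  .of_norm_bounded (NormedSpace.norm_expSeries_summable' (𝕂 := 𝕂) y) fun m => by
    rw [norm_smul (c m), norm_smul]
    gcongr
    exact hc m

theorem norm_neg_one_pow_div_factorial_le (k : ℕ) {j n : ℕ} (h : j ≤ n) :
    ‖(-1 : ℝ) ^ k / n.factorial‖ ≤ ‖(j.factorial : ℝ)⁻¹‖ := by
  simp only [norm_div, norm_pow, norm_neg, norm_one, one_pow, one_div, norm_inv, Real.norm_natCast]
  gcongr

open NormedSpace in
theorem exp_of_square_zero_pair {A : Type*} [NormedRing A] [NormedAlgebra ℝ A]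
    [CompleteSpace A] (a b : A) (ha : a ^ 2 = 0) (hb : b ^ 2 = 0) :
    exp (a - b) =
      1 + (∑' m : ℕ, (((-1 : ℝ) ^ (m + 1) / ((2 * (m + 1)).factorial : ℝ)) • (b * a) ^ (m + 1)))
        + a * (∑' m : ℕ, (((-1 : ℝ) ^ m / ((2 * m + 1).factorial : ℝ)) • (b * a) ^ m))
        - (∑' m : ℕ, (((-1 : ℝ) ^ m / ((2 * m + 1).factorial : ℝ)) • (b * a) ^ m)) * b
        + a * (∑' m : ℕ, (((-1 : ℝ) ^ (m + 1) / ((2 * (m + 1)).factorial : ℝ)) • (b * a) ^ m)) * b := by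
  have hS : Summable fun m : ℕ =>
      ((-1 : ℝ) ^ (m + 1) / ((2 * (m + 1)).factorial : ℝ)) • (b * a) ^ m :=
    summable_smul_pow_of_norm_le_norm_inv_factorial _ fun m =>
      norm_neg_one_pow_div_factorial_le _ (by omega)
  have hT : Summable fun m : ℕ =>
      ((-1 : ℝ) ^ m / ((2 * m + 1).factorial : ℝ)) • (b * a) ^ m :=
    summable_smul_pow_of_norm_le_norm_inv_factorial _ fun m =>
      norm_neg_one_pow_div_factorial_le _ (by omega)
  have hexp := hasSum_smul_sub_pow_of_sq_eq_zero ha hb (fun n => (n.factorial : ℝ)⁻¹)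
    (hS.hasSum.congr_fun fun m => by simp only [div_eq_mul_inv])
    (hT.hasSum.congr_fun fun m => by simp only [div_eq_mul_inv])
  have hshift :
      ∑' m : ℕ, ((-1 : ℝ) ^ (m + 1) / ((2 * (m + 1)).factorial : ℝ)) • (b * a) ^ (m + 1) =
        b * a * ∑' m : ℕ,
          ((-1 : ℝ) ^ (m + 1) / ((2 * (m + 1)).factorial : ℝ)) • (b * a) ^ m := by
    simp_rw [pow_succ' (b * a), ← mul_smul_comm]
    exact hS.tsum_mul_left _
  rw [(exp_series_hasSum_exp' (a - b)).unique hexp, hshift, Nat.factorial_zero, Nat.cast_one,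
    inv_one, one_smul]
  abel
end

section
/- There exists a constant C > 0 such that for all real numbers x, y with 0 ≤ x ≤ y, one has |cos(y − x) − 1 + (x − y)·sin(x)·sin(y)/y| ≤ C·(y² − x²), where sin(y)/y is interpreted as 1 when y = 0. -/
lemma one_sub_cos_le_half_sq' (t : ℝ) : 1 - Real.cos t ≤ t ^ 2 / 2 := by
  have h : Real.cos t = 1 - 2 * Real.sin (t / 2) ^ 2 := by
    have h2 : Real.cos t = 2 * Real.cos (t / 2) ^ 2 - 1 := by
      have := Real.cos_two_mul (t / 2)
      rwa [show 2 * (t / 2) = t by ring] at this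
    nlinarith [Real.sin_sq_add_cos_sq (t / 2)]
  have hs : Real.sin (t / 2) ^ 2 ≤ (t / 2) ^ 2 := by
    have := Real.abs_sin_le_abs (x := t / 2)
    nlinarith [abs_nonneg (Real.sin (t/2)), sq_abs (Real.sin (t/2)), sq_abs (t/2)]
  nlinarith

theorem cos_diff_remainder_bound :
    ∃ C > 0, ∀ x y : ℝ, 0 ≤ x → x ≤ y →
      |Real.cos (y - x) - 1 +
        (x - y) * Real.sin x * (if y = 0 then (1:ℝ) else Real.sin y / y)|
        ≤ C * (y ^ 2 - x ^ 2) := by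
  refine ⟨2, by norm_num, fun x y hx hxy => ?_⟩
  by_cases hy : y = 0
  · have hx0 : x = 0 := le_antisymm (hy ▸ hxy) hx
    simp [hy, hx0]
  · rw [if_neg hy]
    have hy0 : 0 < y := lt_of_le_of_ne (hx.trans hxy) (Ne.symm hy)
    have h1 : |Real.cos (y - x) - 1| ≤ (y - x) ^ 2 / 2 := by
      rw [abs_sub_comm, abs_of_nonneg (by linarith [Real.cos_le_one (y - x)])]
      exact one_sub_cos_le_half_sq' (y - x)
    have hsx : |Real.sin x| ≤ x := by
      simpa [abs_of_nonneg hx] using Real.abs_sin_le_abs (x := x)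
    have hsy : |Real.sin y / y| ≤ 1 := by
      rw [abs_div, abs_of_pos hy0, div_le_one hy0]
      simpa [abs_of_pos hy0] using Real.abs_sin_le_abs (x := y)
    have h2 : |(x - y) * Real.sin x * (Real.sin y / y)| ≤ (y - x) * x := by
      rw [abs_mul, abs_mul, abs_sub_comm, abs_of_nonneg (by linarith : (0:ℝ) ≤ y - x)]
      calc (y - x) * |Real.sin x| * |Real.sin y / y|
          ≤ (y - x) * x * 1 := by
            apply mul_le_mul (mul_le_mul_of_nonneg_left hsx (by linarith)) hsy
              (abs_nonneg _) (mul_nonneg (by linarith) hx)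
        _ = (y - x) * x := mul_one _
    calc |Real.cos (y - x) - 1 + (x - y) * Real.sin x * (Real.sin y / y)|
        ≤ |Real.cos (y - x) - 1| + |(x - y) * Real.sin x * (Real.sin y / y)| := abs_add_le _ _
      _ ≤ (y - x) ^ 2 / 2 + (y - x) * x := add_le_add h1 h2
      _ ≤ 2 * (y ^ 2 - x ^ 2) := by nlinarith
end

section
/- There exists a constant C > 0 such that for all real numbers x, y, z, v with 0 ≤ x ≤ v, 0 ≤ y ≤ v, 0 ≤ z ≤ v, one has |cos(x − y) + (sin x / x)·(sin y / y)·(z² − x·y) − 1| ≤ C·[(v² − z²) + (v² − x²) + (v² − y²)], where sin t / t is interpreted as 1 at t = 0. -/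
theorem cos_sinc_remainder_bound :
    ∃ C > 0, ∀ x y z v : ℝ,
      0 ≤ x → x ≤ v → 0 ≤ y → y ≤ v → 0 ≤ z → z ≤ v →
      |Real.cos (x - y) +
          (if x = 0 then (1:ℝ) else Real.sin x / x) *
          (if y = 0 then (1:ℝ) else Real.sin y / y) * (z ^ 2 - x * y) - 1|
        ≤ C * ((v ^ 2 - z ^ 2) + (v ^ 2 - x ^ 2) + (v ^ 2 - y ^ 2)) := by
  refine ⟨2, by norm_num, ?_⟩
  intro x y z v hx hxv hy hyv hz hzv
  set sx := (if x = 0 then (1:ℝ) else Real.sin x / x) with hsx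
  set sy := (if y = 0 then (1:ℝ) else Real.sin y / y) with hsy
  have habs : ∀ t : ℝ, |if t = 0 then (1:ℝ) else Real.sin t / t| ≤ 1 := by
    intro t
    split_ifs with h
    · simp
    · rw [abs_div]
      exact div_le_one_of_le₀ (Real.abs_sin_le_abs)
        (abs_nonneg _)
  have hsx1 : |sx| ≤ 1 := habs x
  have hsy1 : |sy| ≤ 1 := habs y
  have hcos : |Real.cos (x - y) - 1| ≤ (x - y) ^ 2 / 2 := by
    have h1 := Real.cos_le_one (x - y)
    have h2 := Real.one_sub_sq_div_two_le_cos (x := x - y)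
    rw [abs_le]
    constructor <;> nlinarith
  have hz2 : |z ^ 2 - x * y| ≤ (v ^ 2 - z ^ 2) + (v ^ 2 - x * y) := by
    rw [abs_le]
    constructor <;> nlinarith
  have hstep : |Real.cos (x - y) + sx * sy * (z ^ 2 - x * y) - 1|
      ≤ (x - y) ^ 2 / 2 + |z ^ 2 - x * y| := by
    have h1 : Real.cos (x - y) + sx * sy * (z ^ 2 - x * y) - 1
        = (Real.cos (x - y) - 1) + sx * sy * (z ^ 2 - x * y) := by ring
    rw [h1]
    refine (abs_add_le _ _).trans (add_le_add hcos ?_)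
    rw [abs_mul, abs_mul]
    have h2 : |sx| * |sy| ≤ 1 := mul_le_one₀ hsx1 (abs_nonneg _) hsy1
    calc |sx| * |sy| * |z ^ 2 - x * y| ≤ 1 * |z ^ 2 - x * y| :=
          mul_le_mul_of_nonneg_right h2 (abs_nonneg _)
      _ = |z ^ 2 - x * y| := one_mul _
  have hsq : (x - y) ^ 2 ≤ (v ^ 2 - x ^ 2) + (v ^ 2 - y ^ 2) := by
    nlinarith [mul_nonneg (sub_nonneg.mpr hxv) (sub_nonneg.mpr hyv)]
  calc |Real.cos (x - y) + sx * sy * (z ^ 2 - x * y) - 1|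
      ≤ (x - y) ^ 2 / 2 + |z ^ 2 - x * y| := hstep
    _ ≤ (x - y) ^ 2 / 2 + ((v ^ 2 - z ^ 2) + (v ^ 2 - x * y)) := by linarith
    _ ≤ 2 * ((v ^ 2 - z ^ 2) + (v ^ 2 - x ^ 2) + (v ^ 2 - y ^ 2)) := by nlinarith [sq_nonneg (x - y), hsq]
end
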